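/- arXiv:1611.01337 — 3 statements merged into one kernel-verified Lean document; each statement's English description precedes it below -/
import Mathlib

section
/- The feedback of a constructive function is constructive: if f : A × B →c A × B' is monotone (where A^⊥ is a flat cpo with least element ⊥), then feedback(f) : B →c B' defined by feedback(f)(y) = f₂(μx. f₁(x,y), y) is monotone, where f = (f₁, f₂) and μx. f₁(x,y) is the least fixpoint of x ↦ f₁(x,y). -/
/-- Flat order on A^bot, modeled as `Option A` with `none` as bottom. -/
def fle {A : Type*} (a b : Option A) : Prop := a = none ∨ a = b

/-- Product order on pairs. -/
def ple {A B : Type*} (ra : A → A → Prop) (rb : B → B → Prop) (x y : A × B) : Prop :=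
  ra x.1 y.1 ∧ rb x.2 y.2

/-- Monotonicity with respect to given relations. -/
def Mono {A B : Type*} (ra : A → A → Prop) (rb : B → B → Prop) (f : A → B) : Prop :=
  ∀ x y, ra x y → rb (f x) (f y)

/-- Least fixpoint of a monotone map on the flat cpo `Option A`:
on a flat order, iterating twice from bottom = `none` gives the least fixpoint. -/
def olfp {A : Type*} (g : Option A → Option A) : Option A := g (g none)

/-- Feedback: feedback(f)(y) = f₂(μx. f₁(x,y), y). -/
def feedback {A B B' : Type*} (f : Option A × B → Option A × B') (y : B) : B' :=
  (f (olfp (fun x => (f (x, y)).1), y)).2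

/-- Parallel composition (f ∥ g)(x,y) = (f x, g y). -/
def par {A B A' B' : Type*} (f : A → B) (g : A' → B') (p : A × A') : B × B' :=
  (f p.1, g p.2)

theorem feedback_constructive {A B B' : Type*}
    (f : Option A × Option B → Option A × Option B')
    (hf : Mono (ple fle fle) (ple fle fle) f) :
    Mono fle fle (feedback f) := by
  intro y y' hy
  have h0 : fle (none : Option A) none := Or.inl rfl
  have h1 := hf (none, y) (none, y') ⟨h0, hy⟩
  have h2 := hf ((f (none, y)).1, y) ((f (none, y')).1, y') ⟨h1.1, hy⟩
  exact (hf (olfp (fun x => (f (x, y)).1), y) (olfp (fun x => (f (x, y')).1), y')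
    ⟨h2.1, hy⟩).2
end

section
/- For constructive functions, the feedback of switch is the identity: feedback(Switch(a,a)) = Id(a), where feedback(f)(y) = f₂(μx. f₁(x,y), y) uses the least fixpoint in the flat cpo A^⊥. -/
/-- Switch swaps the two components of its input. -/
def switch {A B : Type*} (p : A × B) : B × A := (p.2, p.1)

theorem feedback_switch_axiom (A : Type*) :
    feedback (switch (A := Option A) (B := Option A)) = id := by
  funext y
  rfl
end

section
/- Hoare rule for while with variant: let b, I, p, q be predicates on states, t : Σ → ℕ, and P a monotone predicate transformer. If (1) for every n, the triple (I ∧ b ∧ t = n) {|P|} (I ∧ t < n) holds, (2) p ⊆ I, and (3) ¬b ∩ I ⊆ q, then p {| while b do P |} q holds, where while b do P is the least fixpoint of X ↦ if b then (P ;; X) else skip. -/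
/-- Hoare total correctness triple: p ⊆ P(q). -/
def Hoare {St : Type*} (p : St → Prop) (P : (St → Prop) → (St → Prop)) (q : St → Prop) : Prop :=
  ∀ σ, p σ → P q σ

/-- The body functional of the while loop: X ↦ if b then (P ;; X) else skip. -/
def whileFun {St : Type*} (b : St → Prop) (P : (St → Prop) → (St → Prop))
    (X : (St → Prop) → (St → Prop)) : (St → Prop) → (St → Prop) :=
  fun q σ => (b σ ∧ P (X q) σ) ∨ (¬ b σ ∧ q σ)

/-- while b do P, as the least fixpoint (Knaster–Tarski) of `whileFun b P` in the
complete lattice of predicate transformers under the pointwise order. -/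
noncomputable def whileDo {St : Type*} (b : St → Prop) (P : (St → Prop) → (St → Prop)) :
    (St → Prop) → (St → Prop) :=
  sInf {X : (St → Prop) → (St → Prop) | whileFun b P X ≤ X}

theorem hoare_while {St : Type*}
    (b I p q : St → Prop) (t : St → ℕ)
    (P : (St → Prop) → (St → Prop)) (hP : Monotone P)
    (h1 : ∀ n : ℕ, Hoare (fun σ => I σ ∧ b σ ∧ t σ = n) P (fun σ => I σ ∧ t σ < n))
    (h2 : ∀ σ, p σ → I σ)
    (h3 : ∀ σ, ¬ b σ ∧ I σ → q σ) :
    Hoare p (whileDo b P) q := by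
  intro σ hp
  have key : ∀ X ∈ {X : (St → Prop) → (St → Prop) | whileFun b P X ≤ X},
      ∀ n σ, I σ → t σ = n → X q σ := by
    intro X hX n
    induction n using Nat.strong_induction_on with
    | _ n ih =>
      intro σ hI ht
      apply hX q σ
      by_cases hb : b σ
      · left
        refine ⟨hb, ?_⟩
        have := h1 n σ ⟨hI, hb, ht⟩
        exact hP (fun σ' h' => ih (t σ') h'.2 σ' h'.1 rfl) σ this
      · exact Or.inr ⟨hb, h3 σ ⟨hb, hI⟩⟩
  have : ∀ X ∈ {X : (St → Prop) → (St → Prop) | whileFun b P X ≤ X}, X q σ :=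
    fun X hX => key X hX (t σ) σ (h2 σ hp) rfl
  simpa [whileDo, sInf_apply, iInf_apply, sInf_Prop_eq] using
    fun X hX => this X hX
end
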